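/- arXiv:2311.17559 — 12 statements merged into one kernel-verified Lean document; each statement's English description precedes it below -/
import Mathlib

section
/- Let A be an n×n complex matrix and M an invertible Hermitian n×n matrix. If matrices X and Y both satisfy (MAX)* = MAX, XA² = A, AX² = X (and correspondingly for Y), then X = Y. That is, the M-weighted core inverse of A is unique when it exists. -/
open Matrix

theorem mweighted_core_inverse_unique {n : ℕ}
    (M A X Y : Matrix (Fin n) (Fin n) ℂ)
    (hM : IsUnit M) (hMherm : Mᴴ = M)
    (hX1 : (M * A * X)ᴴ = M * A * X) (hX2 : X * A ^ 2 = A) (hX3 : A * X ^ 2 = X)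
    (hY1 : (M * A * Y)ᴴ = M * A * Y) (hY2 : Y * A ^ 2 = A) (hY3 : A * Y ^ 2 = Y) :
    X = Y := by
  have hx2 : X * (A * A) = A := by rw [← pow_two]; exact hX2
  have hy2 : Y * (A * A) = A := by rw [← pow_two]; exact hY2
  have hx3 : A * (X * X) = X := by rw [← pow_two]; exact hX3
  have hy3 : A * (Y * Y) = Y := by rw [← pow_two]; exact hY3
  -- A * X * A = A
  have hAXA : A * X * A = A := by
    calc A * X * A = A * X * (X * (A * A)) := by rw [hx2]
      _ = A * (X * X) * (A * A) := by noncomm_ring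
      _ = X * (A * A) := by rw [hx3]
      _ = A := hx2
  have hAYA : A * Y * A = A := by
    calc A * Y * A = A * Y * (Y * (A * A)) := by rw [hy2]
      _ = A * (Y * Y) * (A * A) := by noncomm_ring
      _ = Y * (A * A) := by rw [hy3]
      _ = A := hy2
  -- M A X = M A Y
  have hMAXY : M * A * X = M * A * Y := by
    calc M * A * X = M * (A * Y * A) * X := by rw [hAYA]
      _ = (M * A * Y) * (A * X) := by noncomm_ring
      _ = (M * A * Y)ᴴ * (A * X) := by rw [hY1]
      _ = Yᴴ * Aᴴ * (M * A * X) := by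
            simp [conjTranspose_mul, hMherm, Matrix.mul_assoc]
      _ = Yᴴ * Aᴴ * (M * A * X)ᴴ := by rw [hX1]
      _ = Yᴴ * ((A * X * A)ᴴ * M) := by
            simp [conjTranspose_mul, hMherm, Matrix.mul_assoc]
      _ = Yᴴ * (Aᴴ * M) := by rw [hAXA]
      _ = (M * A * Y)ᴴ := by
            simp [conjTranspose_mul, hMherm, Matrix.mul_assoc]
      _ = M * A * Y := hY1
  have hAX : A * X = A * Y := by
    apply hM.mul_left_cancel
    calc M * (A * X) = M * A * X := by rw [Matrix.mul_assoc]
      _ = M * A * Y := hMAXY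
      _ = M * (A * Y) := by rw [Matrix.mul_assoc]
  -- X A X = X, Y A Y = Y
  have hXAX : X * A * X = X := by
    calc X * A * X = X * A * (A * (X * X)) := by rw [hx3]
      _ = X * (A * A) * (X * X) := by noncomm_ring
      _ = A * (X * X) := by rw [hx2]
      _ = X := hx3
  have hYAY : Y * A * Y = Y := by
    calc Y * A * Y = Y * A * (A * (Y * Y)) := by rw [hy3]
      _ = Y * (A * A) * (Y * Y) := by noncomm_ring
      _ = A * (Y * Y) := by rw [hy2]
      _ = Y := hy3
  -- X - Y = (X - Y) * (A * X) = (X - Y) * (A*A) * (X*X) = 0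
  have key : X - Y = (X - Y) * (A * X) := by
    calc X - Y = X * A * X - Y * A * Y := by rw [hXAX, hYAY]
      _ = X * (A * X) - Y * (A * Y) := by rw [Matrix.mul_assoc, Matrix.mul_assoc]
      _ = X * (A * X) - Y * (A * X) := by rw [hAX]
      _ = (X - Y) * (A * X) := by noncomm_ring
  have hAXsq : A * X = A * A * (X * X) := by
    calc A * X = A * (A * (X * X)) := by rw [hx3]
      _ = A * A * (X * X) := by rw [Matrix.mul_assoc]
  have hzero : (X - Y) * (A * A) = 0 := by
    rw [Matrix.sub_mul, hx2, hy2, sub_self]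
  have : X - Y = 0 := by
    calc X - Y = (X - Y) * (A * X) := key
      _ = (X - Y) * (A * A) * (X * X) := by rw [hAXsq, ← Matrix.mul_assoc]
      _ = 0 := by rw [hzero, Matrix.zero_mul]
  exact sub_eq_zero.mp this
end

section
/- Let A be an n×n complex matrix. If a matrix X satisfies XA² = A and AX² = X, then X satisfies AXA = A and XAX = X (i.e., X is a {1,2}-inverse of A). -/
open Matrix

theorem six_seven_implies_one_two {n : ℕ}
    (A X : Matrix (Fin n) (Fin n) ℂ)
    (h6 : X * A ^ 2 = A) (h7 : A * X ^ 2 = X) :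
    A * X * A = A ∧ X * A * X = X := by
  constructor
  · calc A * X * A = A * X * (X * A ^ 2) := by rw [h6]
      _ = (A * X ^ 2) * A ^ 2 := by noncomm_ring
      _ = X * A ^ 2 := by rw [h7]
      _ = A := h6
  · calc X * A * X = X * A * (A * X ^ 2) := by rw [h7]
      _ = (X * A ^ 2) * X ^ 2 := by noncomm_ring
      _ = A * X ^ 2 := by rw [h6]
      _ = X := h7
end

section
/- Let A be an n×n complex matrix such that A = A²X = YA² for some matrices X, Y ∈ ℂ^{n×n}. Then the group inverse A^# exists and A^# = AX² = YAX = Y²A. -/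
open Matrix

theorem group_inverse_exists_of_factorizations {n : ℕ}
    (A X Y : Matrix (Fin n) (Fin n) ℂ)
    (hX : A = A ^ 2 * X) (hY : A = Y * A ^ 2) :
    ∃ G : Matrix (Fin n) (Fin n) ℂ,
      (A * G * A = A ∧ G * A * G = G ∧ A * G = G * A) ∧
      G = A * X ^ 2 ∧ G = Y * A * X ∧ G = Y ^ 2 * A := by
  rw [pow_two] at hX hY
  have hAX : A * X = Y * A := by
    calc A * X = Y * (A * A) * X := by rw [← hY]
    _ = Y * (A * A * X) := by noncomm_ring
    _ = Y * A := by rw [← hX]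
  have hAXA : A * X * A = A := by rw [hAX, mul_assoc, ← hY]
  have hAYA : A * Y * A = A := by
    calc A * Y * A = A * (Y * A) := by noncomm_ring
    _ = A * (A * X) := by rw [hAX]
    _ = A * A * X := by noncomm_ring
    _ = A := hX.symm
  have hAG : A * (Y * A * X) = A * X := by
    calc A * (Y * A * X) = A * Y * A * X := by noncomm_ring
    _ = A * X := by rw [hAYA]
  have hGA : Y * A * X * A = A * X := by
    calc Y * A * X * A = Y * (A * X * A) := by noncomm_ring
    _ = Y * A := by rw [hAXA]
    _ = A * X := hAX.symm
  refine ⟨Y * A * X, ⟨?_, ?_, ?_⟩, ?_, rfl, ?_⟩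
  · rw [mul_assoc A, hGA, ← mul_assoc, ← hX]
  · calc Y * A * X * A * (Y * A * X) = Y * (A * X * A) * (Y * A * X) := by noncomm_ring
    _ = Y * A * (Y * A * X) := by rw [hAXA]
    _ = Y * (A * (Y * A * X)) := by noncomm_ring
    _ = Y * (A * X) := by rw [hAG]
    _ = Y * A * X := by noncomm_ring
  · rw [hAG, hGA]
  · calc Y * A * X = A * X * X := by rw [hAX]
    _ = A * X ^ 2 := by noncomm_ring
  · calc Y * A * X = Y * (A * X) := by noncomm_ring
    _ = Y * (Y * A) := by rw [hAX]
    _ = Y ^ 2 * A := by noncomm_ring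
end

section
/- Let M be an invertible Hermitian n×n matrix and A, B n×n matrices such that the M-weighted core inverses of A, B, and AB exist and satisfy (AB)^{⊕,M} = B^{⊕,M} A^{⊕,M}. Then R(B^{⊕,M} A) ⊆ R(AB) ⊆ R(BA). -/
open Matrix

/-- `X` is the `M`-weighted core inverse of `A`. -/
def IsMCore {n : ℕ} (M A X : Matrix (Fin n) (Fin n) ℂ) : Prop :=
  (M * A * X)ᴴ = M * A * X ∧ X * A ^ 2 = A ∧ A * X ^ 2 = X

theorem reverse_order_range_inclusions {n : ℕ}
    (M A B XA XB XAB : Matrix (Fin n) (Fin n) ℂ)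
    (hM : IsUnit M) (hMherm : Mᴴ = M)
    (hXA : IsMCore M A XA) (hXB : IsMCore M B XB) (hXAB : IsMCore M (A * B) XAB)
    (hrev : XAB = XB * XA) :
    LinearMap.range (XB * A).mulVecLin ≤ LinearMap.range (A * B).mulVecLin ∧
    LinearMap.range (A * B).mulVecLin ≤ LinearMap.range (B * A).mulVecLin := by
  obtain ⟨-, hA1, hA2⟩ := hXA
  obtain ⟨-, hB1, hB2⟩ := hXB
  obtain ⟨-, hAB1, hAB2⟩ := hXAB
  -- e1 : XB * A factors through A*B
  have e1 : XB * A = (A * B) * (XAB ^ 2 * A ^ 2) := by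
    calc XB * A = XB * (XA * A ^ 2) := by rw [hA1]
    _ = (XB * XA) * A ^ 2 := by rw [mul_assoc]
    _ = XAB * A ^ 2 := by rw [hrev]
    _ = ((A * B) * XAB ^ 2) * A ^ 2 := by rw [hAB2]
    _ = (A * B) * (XAB ^ 2 * A ^ 2) := by rw [mul_assoc]
  -- e2 : A*B factors through B*A
  have e2 : A * B = (B * A) * (B * XAB ^ 2 * A ^ 2 * B * XAB ^ 2 * (A * B) ^ 2) := by
    have key : XAB = (B * A) * (B * XAB ^ 2 * A ^ 2 * B * XAB ^ 2) := by
      calc XAB = XB * XA := hrev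
      _ = (B * XB ^ 2) * XA := by rw [hB2]
      _ = B * (XB * (XB * XA)) := by rw [mul_assoc, sq, mul_assoc]
      _ = B * (XB * XAB) := by rw [hrev]
      _ = B * (XB * ((A * B) * XAB ^ 2)) := by rw [hAB2]
      _ = B * ((XB * A) * (B * XAB ^ 2)) := by
            rw [mul_assoc XB A, ← mul_assoc A B, ← mul_assoc (XB) (A*B)]
      _ = B * (((A * B) * (XAB ^ 2 * A ^ 2)) * (B * XAB ^ 2)) := by rw [e1]
      _ = (B * A) * (B * XAB ^ 2 * A ^ 2 * B * XAB ^ 2) := by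
            simp only [mul_assoc]
    calc A * B = XAB * (A * B) ^ 2 := (hAB1).symm
    _ = ((B * A) * (B * XAB ^ 2 * A ^ 2 * B * XAB ^ 2)) * (A * B) ^ 2 := by rw [← key]
    _ = (B * A) * (B * XAB ^ 2 * A ^ 2 * B * XAB ^ 2 * (A * B) ^ 2) := by
          simp only [mul_assoc]
  constructor
  · rw [e1, Matrix.mulVecLin_mul]
    exact LinearMap.range_comp_le_range _ _
  · rw [show LinearMap.range (A * B).mulVecLin =
        LinearMap.range ((B * A) * (B * XAB ^ 2 * A ^ 2 * B * XAB ^ 2 * (A * B) ^ 2)).mulVecLin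
        from by rw [← e2], Matrix.mulVecLin_mul]
    exact LinearMap.range_comp_le_range _ _
end

section
/- Let M be an invertible Hermitian n×n matrix and A, B n×n matrices with M-weighted core inverses whose product's M-weighted core inverse satisfies (AB)^{⊕,M} = B^{⊕,M} A^{⊕,M}. Set C = A B B^{⊕,M}. Then X = B B^{⊕,M} A^{⊕,M} satisfies (MCX)* = MCX and XC² = C. -/
open Matrix

theorem reverse_order_three_six {n : ℕ}
    (M A B XA XB XAB : Matrix (Fin n) (Fin n) ℂ)
    (hM : IsUnit M) (hMherm : Mᴴ = M)
    (hXA : IsMCore M A XA) (hXB : IsMCore M B XB) (hXAB : IsMCore M (A * B) XAB)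
    (hrev : XAB = XB * XA) :
    (M * (A * B * XB) * (B * XB * XA))ᴴ = M * (A * B * XB) * (B * XB * XA) ∧
    (B * XB * XA) * (A * B * XB) ^ 2 = A * B * XB := by
  obtain ⟨hXBh, hb, hb2⟩ := hXB
  obtain ⟨hXAh, ha, ha2⟩ := hXA
  obtain ⟨habh, hab1, hab2⟩ := hXAB
  rw [hrev] at habh hab1 hab2
  -- B * XB * B = B
  have hB1 : B * XB * B = B := by
    calc B * XB * B = B * XB * (XB * B ^ 2) := by rw [hb]
      _ = B * XB ^ 2 * B ^ 2 := by noncomm_ring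
      _ = XB * B ^ 2 := by rw [hb2]
      _ = B := hb
  -- B * XB * (A * B) = A * B
  have hPAB : B * XB * (A * B) = A * B := by
    calc B * XB * (A * B) = B * XB * (XB * XA * (A * B) ^ 2) := by rw [hab1]
      _ = B * XB ^ 2 * (XA * (A * B) ^ 2) := by noncomm_ring
      _ = XB * (XA * (A * B) ^ 2) := by rw [hb2]
      _ = XB * XA * (A * B) ^ 2 := by noncomm_ring
      _ = A * B := hab1
  constructor
  · have key1 : M * (A * B * XB) * (B * XB * XA) = M * (A * B) * (XB * XA) := by
      calc M * (A * B * XB) * (B * XB * XA)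
          = M * A * (B * XB * B) * (XB * XA) := by noncomm_ring
        _ = M * A * B * (XB * XA) := by rw [hB1]
        _ = M * (A * B) * (XB * XA) := by noncomm_ring
    rw [key1]
    exact habh
  · calc (B * XB * XA) * (A * B * XB) ^ 2
        = B * XB * XA * (A * (B * XB * (A * B)) * XB) := by noncomm_ring
      _ = B * XB * XA * (A * (A * B) * XB) := by rw [hPAB]
      _ = B * XB * (XA * A ^ 2) * (B * XB) := by noncomm_ring
      _ = B * XB * A * (B * XB) := by rw [ha]
      _ = B * XB * (A * B) * XB := by noncomm_ring
      _ = A * B * XB := by rw [hPAB]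
end

section
/- Let M be an invertible Hermitian n×n matrix and A, B n×n matrices with ind(A) = ind(B) = 1 whose M-weighted core inverses exist. If A² = BA, then ind(AB) = 1 and (AB)^{⊕,M} = B^{⊕,M} A^{⊕,M}. -/
open Matrix

theorem reverse_order_of_A_sq_eq_BA {n : ℕ}
    (M A B XA XB : Matrix (Fin n) (Fin n) ℂ)
    (hM : IsUnit M) (hMherm : Mᴴ = M)
    (hindA : A.rank = (A ^ 2).rank) (hindB : B.rank = (B ^ 2).rank)
    (hXA : IsMCore M A XA) (hXB : IsMCore M B XB)
    (h : A ^ 2 = B * A) :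
    (A * B).rank = ((A * B) ^ 2).rank ∧ IsMCore M (A * B) (XB * XA) := by
  obtain ⟨h1, h2, h3⟩ := hXA
  obtain ⟨k1, k2, k3⟩ := hXB
  rw [pow_two] at h2 h3 k2 k3 h
  -- h2 : XA * (A * A) = A ; h3 : A * (XA * XA) = XA ; similarly k2 k3 ; h : A * A = B * A
  have e1 : A * (XA * A) = A := by
    calc A * (XA * A) = A * (XA * (XA * (A * A))) := by rw [h2]
      _ = (A * (XA * XA)) * (A * A) := by simp only [mul_assoc]
      _ = XA * (A * A) := by rw [h3]
      _ = A := h2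
  have e2 : A * (A * (XA * (XA * A))) = A := by
    calc A * (A * (XA * (XA * A))) = A * ((A * (XA * XA)) * A) := by simp only [mul_assoc]
      _ = A * (XA * A) := by rw [h3]
      _ = A := e1
  have eb1 : B * (XB * B) = B := by
    calc B * (XB * B) = B * (XB * (XB * (B * B))) := by rw [k2]
      _ = (B * (XB * XB)) * (B * B) := by simp only [mul_assoc]
      _ = XB * (B * B) := by rw [k3]
      _ = B := k2
  have e4 : B * (XB * A) = A := by
    calc B * (XB * A) = B * (XB * (A * (A * (XA * (XA * A))))) := by
          conv_lhs => rw [← e2]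
      _ = B * (XB * ((A * A) * (XA * (XA * A)))) := by simp only [mul_assoc]
      _ = B * (XB * ((B * A) * (XA * (XA * A)))) := by rw [h]
      _ = (B * (XB * B)) * (A * (XA * (XA * A))) := by simp only [mul_assoc]
      _ = B * (A * (XA * (XA * A))) := by rw [eb1]
      _ = (B * A) * (XA * (XA * A)) := by simp only [mul_assoc]
      _ = (A * A) * (XA * (XA * A)) := by rw [h]
      _ = A := by simpa only [mul_assoc] using e2
  have e5 : XB * (B * A) = A := by
    calc XB * (B * A) = XB * (B * (B * (XB * A))) := by conv_lhs => rw [← e4]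
      _ = (XB * (B * B)) * (XB * A) := by simp only [mul_assoc]
      _ = B * (XB * A) := by rw [k2]
      _ = A := e4
  have e6 : XB * A = XA * A := by
    calc XB * A = XB * (A * (A * (XA * (XA * A)))) := by conv_lhs => rw [← e2]
      _ = (XB * (A * A)) * (XA * (XA * A)) := by simp only [mul_assoc]
      _ = (XB * (B * A)) * (XA * (XA * A)) := by rw [h]
      _ = A * (XA * (XA * A)) := by rw [e5]
      _ = (A * (XA * XA)) * A := by simp only [mul_assoc]
      _ = XA * A := by rw [h3]
  have e7 : XB * XA = XA * XA := by
    calc XB * XA = XB * (A * (XA * XA)) := by conv_lhs => rw [← h3]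
      _ = (XB * A) * (XA * XA) := by simp only [mul_assoc]
      _ = (XA * A) * (XA * XA) := by rw [e6]
      _ = XA * (A * (XA * XA)) := by simp only [mul_assoc]
      _ = XA * XA := by rw [h3]
  have e8 : B * (XB * XA) = XA := by
    calc B * (XB * XA) = B * (XB * (A * (XA * XA))) := by conv_lhs => rw [← h3]
      _ = (B * (XB * A)) * (XA * XA) := by simp only [mul_assoc]
      _ = A * (XA * XA) := by rw [e4]
      _ = XA := h3
  have e8' : B * (XA * XA) = XA := by rw [← e7]; exact e8
  -- Condition 1
  have key : M * (A * B) * (XB * XA) = M * A * XA := by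
    calc M * (A * B) * (XB * XA) = M * (A * (B * (XB * XA))) := by simp only [mul_assoc]
      _ = M * (A * XA) := by rw [e8]
      _ = M * A * XA := by simp only [mul_assoc]
  have G1 : (M * (A * B) * (XB * XA))ᴴ = M * (A * B) * (XB * XA) := by
    rw [key]; exact h1
  -- Condition 2
  have G2 : (XB * XA) * ((A * B) * (A * B)) = A * B := by
    calc (XB * XA) * ((A * B) * (A * B)) = (XA * XA) * ((A * B) * (A * B)) := by rw [e7]
      _ = XA * (XA * (A * ((B * A) * B))) := by simp only [mul_assoc]
      _ = XA * (XA * (A * ((A * A) * B))) := by rw [← h]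
      _ = XA * ((XA * (A * A)) * (A * B)) := by simp only [mul_assoc]
      _ = XA * (A * (A * B)) := by rw [h2]
      _ = (XA * (A * A)) * B := by simp only [mul_assoc]
      _ = A * B := by rw [h2]
  have G2pow : (XB * XA) * (A * B) ^ 2 = A * B := by rw [pow_two]; exact G2
  -- Condition 3
  have G3 : (A * B) * ((XB * XA) * (XB * XA)) = XB * XA := by
    calc (A * B) * ((XB * XA) * (XB * XA))
        = (A * B) * ((XA * XA) * (XA * XA)) := by rw [e7]
      _ = A * ((B * (XA * XA)) * (XA * XA)) := by simp only [mul_assoc]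
      _ = A * (XA * (XA * XA)) := by rw [e8']
      _ = (A * (XA * XA)) * XA := by simp only [mul_assoc]
      _ = XA * XA := by rw [h3]
      _ = XB * XA := e7.symm
  have G3pow : (A * B) * (XB * XA) ^ 2 = XB * XA := by rw [pow_two]; exact G3
  -- Rank condition
  have r1 : ((A * B) ^ 2).rank ≤ (A * B).rank := by
    rw [pow_two]; exact Matrix.rank_mul_le_left _ _
  have r2 : (A * B).rank ≤ ((A * B) ^ 2).rank := by
    calc (A * B).rank = ((XB * XA) * (A * B) ^ 2).rank := by rw [G2pow]
      _ ≤ ((A * B) ^ 2).rank := Matrix.rank_mul_le_right _ _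
  exact ⟨le_antisymm r2 r1, G1, G2pow, G3pow⟩
end

section
/- Let A ∈ ℂ^{m×n}, W ∈ ℂ^{n×m}, and κ = max{ind(AW), ind(WA)}. Then X = (WA)^κ W A A† is the unique solution of the system: X A ((WA)^D)^{κ+1} X = X, A ((WA)^D)^{κ+1} X = A (WA)^D W A A†, and XA = (WA)^{κ+1}. -/
open Matrix

/-- The index of a square matrix: the smallest `k` with `rank (B^k) = rank (B^(k+1))`. -/
noncomputable def matIndex {n : ℕ} (B : Matrix (Fin n) (Fin n) ℂ) : ℕ :=
  sInf {k : ℕ | (B ^ k).rank = (B ^ (k + 1)).rank}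

/-- `D` is the Drazin inverse of `B`. -/
def IsDrazin {n : ℕ} (B D : Matrix (Fin n) (Fin n) ℂ) : Prop :=
  B * D = D * B ∧ D * B * D = D ∧ B ^ (matIndex B + 1) * D = B ^ matIndex B

/-- `X` is the Moore–Penrose inverse of `A`. -/
def IsMP {m n : ℕ} (A : Matrix (Fin m) (Fin n) ℂ) (X : Matrix (Fin n) (Fin m) ℂ) : Prop :=
  A * X * A = A ∧ X * A * X = X ∧ (A * X)ᴴ = A * X ∧ (X * A)ᴴ = X * A

theorem weighted_index_MP_unique {m n : ℕ}
    (A : Matrix (Fin m) (Fin n) ℂ) (W Adag : Matrix (Fin n) (Fin m) ℂ)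
    (hdag : IsMP A Adag)
    (D : Matrix (Fin n) (Fin n) ℂ) (hD : IsDrazin (W * A) D)
    (κ : ℕ) (hκ : κ = max (matIndex (A * W)) (matIndex (W * A))) :
    (((W * A) ^ κ * W * A * Adag) * A * D ^ (κ + 1) * ((W * A) ^ κ * W * A * Adag)
        = (W * A) ^ κ * W * A * Adag ∧
      A * D ^ (κ + 1) * ((W * A) ^ κ * W * A * Adag) = A * D * W * A * Adag ∧
      ((W * A) ^ κ * W * A * Adag) * A = (W * A) ^ (κ + 1)) ∧
    ∀ X : Matrix (Fin n) (Fin m) ℂ,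
      (X * A * D ^ (κ + 1) * X = X ∧
        A * D ^ (κ + 1) * X = A * D * W * A * Adag ∧
        X * A = (W * A) ^ (κ + 1)) →
      X = (W * A) ^ κ * W * A * Adag := by
  obtain ⟨hAA, -, -, -⟩ := hdag
  obtain ⟨hc, hdbd, hk⟩ := hD
  -- D commutes with powers of W*A
  have hcp : ∀ j : ℕ, D * (W * A) ^ j = (W * A) ^ j * D := by
    intro j
    induction j with
    | zero => simp
    | succ j ih =>
        rw [pow_succ, ← mul_assoc, ih, mul_assoc, ← hc, ← mul_assoc]
  -- D^(j+1) * (W*A)^j = D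
  have aux1 : ∀ j : ℕ, D ^ (j + 1) * (W * A) ^ j = D := by
    intro j
    induction j with
    | zero => simp
    | succ j ih =>
        calc D ^ (j + 1 + 1) * (W * A) ^ (j + 1)
            = (D * D ^ (j + 1)) * ((W * A) ^ j * (W * A)) := by
              rw [pow_succ' D (j + 1), pow_succ (W * A) j]
          _ = D * (D ^ (j + 1) * (W * A) ^ j * (W * A)) := by
              simp only [Matrix.mul_assoc]
          _ = D * (D * (W * A)) := by rw [ih]
          _ = D := by rw [← hc, ← Matrix.mul_assoc, hdbd]
  -- (W*A)^(κ+1) * D = (W*A)^κ, since κ ≥ matIndex (W*A)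
  have hle : matIndex (W * A) ≤ κ := hκ ▸ le_max_right _ _
  obtain ⟨j, hj⟩ := Nat.exists_eq_add_of_le hle
  have aux2 : (W * A) ^ (κ + 1) * D = (W * A) ^ κ := by
    subst hj
    have e1 : (W * A) ^ (matIndex (W * A) + j + 1)
        = (W * A) ^ j * (W * A) ^ (matIndex (W * A) + 1) := by
      rw [← pow_add]; congr 1; omega
    rw [e1, mul_assoc, hk, ← pow_add]
    congr 1; omega
  have h3 : ((W * A) ^ κ * W * A * Adag) * A = (W * A) ^ (κ + 1) := by
    calc ((W * A) ^ κ * W * A * Adag) * A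
        = (W * A) ^ κ * (W * (A * Adag * A)) := by simp only [Matrix.mul_assoc]
      _ = (W * A) ^ (κ + 1) := by rw [hAA, pow_succ]
  have h2 : A * D ^ (κ + 1) * ((W * A) ^ κ * W * A * Adag) = A * D * W * A * Adag := by
    calc A * D ^ (κ + 1) * ((W * A) ^ κ * W * A * Adag)
        = A * (D ^ (κ + 1) * (W * A) ^ κ) * (W * (A * Adag)) := by
          simp only [Matrix.mul_assoc]
      _ = A * D * W * A * Adag := by rw [aux1 κ]; simp only [Matrix.mul_assoc]
  have h1 : ((W * A) ^ κ * W * A * Adag) * A * D ^ (κ + 1) * ((W * A) ^ κ * W * A * Adag)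
      = (W * A) ^ κ * W * A * Adag := by
    calc ((W * A) ^ κ * W * A * Adag) * A * D ^ (κ + 1) * ((W * A) ^ κ * W * A * Adag)
        = (((W * A) ^ κ * W * A * Adag) * A) * D ^ (κ + 1) * ((W * A) ^ κ * W * A * Adag) := by
          simp only [Matrix.mul_assoc]
      _ = (W * A) ^ (κ + 1) * D ^ (κ + 1) * ((W * A) ^ κ * W * A * Adag) := by rw [h3]
      _ = ((W * A) ^ (κ + 1) * (D ^ (κ + 1) * (W * A) ^ κ)) * (W * (A * Adag)) := by
          simp only [Matrix.mul_assoc]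
      _ = ((W * A) ^ (κ + 1) * D) * (W * (A * Adag)) := by rw [aux1 κ]
      _ = (W * A) ^ κ * W * A * Adag := by rw [aux2]; simp only [Matrix.mul_assoc]
  refine ⟨⟨h1, h2, h3⟩, ?_⟩
  rintro X ⟨hx1, hx2, hx3⟩
  calc X = X * A * D ^ (κ + 1) * X := hx1.symm
    _ = X * (A * D ^ (κ + 1) * X) := by simp only [Matrix.mul_assoc]
    _ = X * (A * D * W * A * Adag) := by rw [hx2]
    _ = (X * A) * (D * (W * (A * Adag))) := by simp only [Matrix.mul_assoc]
    _ = ((W * A) ^ (κ + 1) * D) * (W * (A * Adag)) := by rw [hx3]; simp only [Matrix.mul_assoc]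
    _ = (W * A) ^ κ * W * A * Adag := by rw [aux2]; simp only [Matrix.mul_assoc]
end

section
/- Let A ∈ ℂ^{m×n}, W ∈ ℂ^{n×m}, and κ = max{ind(AW), ind(WA)}. Then X = A† A W (AW)^κ is the unique solution of the system: X ((AW)^D)^{κ+1} A X = X, X ((AW)^D)^{κ+1} A = A† A W (AW)^D A, and AX = (AW)^{κ+1}. -/
open Matrix

theorem weighted_MP_index_unique {m n : ℕ}
    (A : Matrix (Fin m) (Fin n) ℂ) (W Adag : Matrix (Fin n) (Fin m) ℂ)
    (hdag : IsMP A Adag)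
    (D : Matrix (Fin m) (Fin m) ℂ) (hD : IsDrazin (A * W) D)
    (κ : ℕ) (hκ : κ = max (matIndex (A * W)) (matIndex (W * A))) :
    ((Adag * A * W * (A * W) ^ κ) * D ^ (κ + 1) * A * (Adag * A * W * (A * W) ^ κ)
        = Adag * A * W * (A * W) ^ κ ∧
      (Adag * A * W * (A * W) ^ κ) * D ^ (κ + 1) * A = Adag * A * W * D * A ∧
      A * (Adag * A * W * (A * W) ^ κ) = (A * W) ^ (κ + 1)) ∧
    ∀ X : Matrix (Fin n) (Fin m) ℂ,
      (X * D ^ (κ + 1) * A * X = X ∧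
        X * D ^ (κ + 1) * A = Adag * A * W * D * A ∧
        A * X = (A * W) ^ (κ + 1)) →
      X = Adag * A * W * (A * W) ^ κ :=
  by
  obtain ⟨hA, -, -, -⟩ := hdag
  obtain ⟨hc, hd, hi⟩ := hD
  have hκ0 : matIndex (A * W) ≤ κ := hκ ▸ le_max_left _ _
  -- powers commute with D
  have hcp : ∀ t, (A * W) ^ t * D = D * (A * W) ^ t := by
    intro t
    induction t with
    | zero => simp
    | succ t ih =>
      rw [pow_succ, Matrix.mul_assoc, hc, ← Matrix.mul_assoc, ih,
        Matrix.mul_assoc, ← pow_succ]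
  have L1 : ∀ j, (A * W) ^ (matIndex (A * W) + j + 1) * D = (A * W) ^ (matIndex (A * W) + j) := by
    intro j
    induction j with
    | zero => simpa using hi
    | succ j ih =>
      have e : matIndex (A * W) + (j + 1) + 1 = (matIndex (A * W) + j + 1) + 1 := by ring
      rw [e, pow_succ, Matrix.mul_assoc, hc, ← Matrix.mul_assoc, ih, ← pow_succ]
      rfl
  have L1' : (A * W) ^ (κ + 1) * D = (A * W) ^ κ := by
    obtain ⟨j, rfl⟩ := Nat.exists_eq_add_of_le hκ0
    exact L1 j
  have Lcd : D * (A * W) ^ (κ + 1) = (A * W) ^ κ := by rw [← hcp, L1']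
  -- B^(j+1) * D^(j+1) = B * D
  have L2 : ∀ j, (A * W) ^ (j + 1) * D ^ (j + 1) = (A * W) * D := by
    intro j
    induction j with
    | zero => simp
    | succ j ih =>
      have e1 : (A * W) ^ (j + 1 + 1) = (A * W) * (A * W) ^ (j + 1) := by rw [← pow_succ']
      have e2 : D ^ (j + 1 + 1) = D ^ (j + 1) * D := by rw [← pow_succ]
      rw [e1, e2, Matrix.mul_assoc, ← Matrix.mul_assoc ((A * W) ^ (j+1)), ih, hc, hd, hc]
  have key2 : (A * W) ^ κ * D ^ (κ + 1) = D := by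
    cases κ with
    | zero => simp
    | succ j =>
      have e2 : D ^ (j + 1 + 1) = D ^ (j + 1) * D := by rw [← pow_succ]
      rw [e2, ← Matrix.mul_assoc, L2, hc, hd]
  have hA' : ∀ {p : ℕ} (X : Matrix (Fin n) (Fin p) ℂ), A * (Adag * (A * X)) = A * X := by
    intro p X
    rw [← Matrix.mul_assoc, ← Matrix.mul_assoc, hA]
  have h3 : A * (Adag * A * W * (A * W) ^ κ) = (A * W) ^ (κ + 1) := by
    rw [pow_succ']
    simp only [Matrix.mul_assoc]
    rw [hA']
  have h2 : (Adag * A * W * (A * W) ^ κ) * D ^ (κ + 1) * A = Adag * A * W * D * A := by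
    simp only [Matrix.mul_assoc]
    rw [← Matrix.mul_assoc ((A * W) ^ κ), key2]
  have h1 : (Adag * A * W * (A * W) ^ κ) * D ^ (κ + 1) * A * (Adag * A * W * (A * W) ^ κ)
      = Adag * A * W * (A * W) ^ κ := by
    rw [h2, Matrix.mul_assoc (Adag * A * W * D), h3, Matrix.mul_assoc (Adag * A * W), Lcd]
  refine ⟨⟨h1, h2, h3⟩, ?_⟩
  rintro X ⟨hx1, hx2, hx3⟩
  calc X = X * D ^ (κ + 1) * A * X := hx1.symm
    _ = Adag * A * W * D * A * X := by rw [hx2]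
    _ = Adag * A * W * D * (A * X) := by rw [Matrix.mul_assoc]
    _ = Adag * A * W * (D * (A * W) ^ (κ + 1)) := by rw [hx3, Matrix.mul_assoc]
    _ = Adag * A * W * (A * W) ^ κ := by rw [Lcd]
end

section
/- Let A ∈ ℂ^{m×n}, W ∈ ℂ^{n×m}, κ = max{ind(AW), ind(WA)}, and set A^{κ,†,W} = (WA)^{κ+1} A†. Then X = A^{κ,†,W} if and only if W A^{D,W} W A X = X and AX = (AW)^{κ+1} A A†, where A^{D,W} denotes the W-weighted Drazin inverse of A (so that W A^{D,W} = (WA)^D). -/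
open Matrix

/-- Swap rule: `A (WA)^j = (AW)^j A`. -/
lemma swap_pow {m n : ℕ} (A : Matrix (Fin m) (Fin n) ℂ) (W : Matrix (Fin n) (Fin m) ℂ) :
    ∀ j, A * (W * A) ^ j = (A * W) ^ j * A := by
  intro j
  induction j with
  | zero => simp
  | succ j ih =>
    rw [pow_succ, pow_succ, ← Matrix.mul_assoc, ih]
    simp only [Matrix.mul_assoc]

theorem weighted_index_MP_characterization {m n : ℕ}
    (A : Matrix (Fin m) (Fin n) ℂ) (W Adag : Matrix (Fin n) (Fin m) ℂ)
    (hdag : IsMP A Adag)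
    (D : Matrix (Fin n) (Fin n) ℂ) (hD : IsDrazin (W * A) D)
    (κ : ℕ) (hκ : κ = max (matIndex (A * W)) (matIndex (W * A)))
    (ADW : Matrix (Fin m) (Fin n) ℂ) (hADW : ADW = A * (D * D))
    (X : Matrix (Fin n) (Fin m) ℂ) :
    X = (W * A) ^ (κ + 1) * Adag ↔
      (W * ADW * W * A * X = X ∧ A * X = (A * W) ^ (κ + 1) * A * Adag) := by
  set B := W * A with hB
  obtain ⟨hc, hdbd, hind⟩ := hD
  have hle : matIndex B ≤ κ := hκ ▸ le_max_right _ _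
  obtain ⟨t, ht⟩ : ∃ t, κ = matIndex B + t := ⟨κ - matIndex B, by omega⟩
  -- powers of B commute with D
  have hcomm : ∀ j, D * B ^ j = B ^ j * D := fun j =>
    (Commute.pow_right (Commute.symm hc) j)
  -- B^{κ+1} D = B^κ
  have hpowD : B ^ (κ + 1) * D = B ^ κ := by
    rw [ht, show matIndex B + t + 1 = t + (matIndex B + 1) by ring, pow_add,
      mul_assoc, hind, ← pow_add, Nat.add_comm]
  -- D B^{κ+2} = B^{κ+1}
  have hkey : D * (B * B ^ (κ + 1)) = B ^ (κ + 1) := by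
    calc D * (B * B ^ (κ + 1)) = B * (D * B ^ (κ + 1)) := by
          rw [← Matrix.mul_assoc, ← hc, Matrix.mul_assoc]
      _ = B * (B ^ (κ + 1) * D) := by rw [hcomm]
      _ = B * B ^ κ := by rw [hpowD]
      _ = B ^ (κ + 1) := by rw [← pow_succ']
  -- W · ADW · W · A = D B
  have hDB : W * ADW * W * A = D * B := by
    have e1 : W * ADW * W * A = (B * D) * (D * B) := by
      rw [hADW, hB]; simp only [Matrix.mul_assoc]
    rw [e1, hc]
    calc (D * B) * (D * B) = (D * B * D) * B := by rw [← Matrix.mul_assoc]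
      _ = D * B := by rw [hdbd]
  constructor
  · rintro rfl
    refine ⟨?_, ?_⟩
    · rw [hDB, Matrix.mul_assoc D B, ← Matrix.mul_assoc B, ← Matrix.mul_assoc D, hkey]
    · rw [hB, ← Matrix.mul_assoc, swap_pow]
  · rintro ⟨h1, h2⟩
    rw [hDB] at h1
    have hW2 : W * ((A * W) ^ (κ + 1) * A * Adag) = B * B ^ (κ + 1) * Adag := by
      calc W * ((A * W) ^ (κ + 1) * A * Adag)
          = (W * (A * W) ^ (κ + 1)) * (A * Adag) := by simp only [Matrix.mul_assoc]
        _ = ((W * A) ^ (κ + 1) * W) * (A * Adag) := by rw [swap_pow W A (κ + 1)]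
        _ = B ^ (κ + 1) * B * Adag := by rw [hB]; simp only [Matrix.mul_assoc]
        _ = B * B ^ (κ + 1) * Adag := by rw [pow_mul_comm']
    calc X = D * B * X := h1.symm
      _ = D * (W * (A * X)) := by rw [hB]; simp only [Matrix.mul_assoc]
      _ = D * (W * ((A * W) ^ (κ + 1) * A * Adag)) := by rw [h2]
      _ = D * (B * B ^ (κ + 1) * Adag) := by rw [hW2]
      _ = D * (B * B ^ (κ + 1)) * Adag := by simp only [Matrix.mul_assoc]
      _ = B ^ (κ + 1) * Adag := by rw [hkey]
end

section
/- Let A ∈ ℂ^{m×n}, W ∈ ℂ^{n×m}, κ = max{ind(AW), ind(WA)}. The W-weighted MP-κ-MP matrix satisfies A^{†,κ,†,W} = A^{†,κ,W} A A^{D,†,W}, where A^{†,κ,†,W} = A†(AW)^{κ+1}AA†, A^{†,κ,W} = A†(AW)^{κ+1}, and A^{D,†,W} = W A^{D,W} W A A†. -/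
open Matrix

theorem weighted_MP_index_MP_factorization {m n : ℕ}
    (A : Matrix (Fin m) (Fin n) ℂ) (W Adag : Matrix (Fin n) (Fin m) ℂ)
    (hdag : IsMP A Adag)
    (D : Matrix (Fin n) (Fin n) ℂ) (hD : IsDrazin (W * A) D)
    (κ : ℕ) (hκ : κ = max (matIndex (A * W)) (matIndex (W * A)))
    (ADW : Matrix (Fin m) (Fin n) ℂ) (hADW : ADW = A * (D * D)) :
    Adag * (A * W) ^ (κ + 1) * A * Adag =
      (Adag * (A * W) ^ (κ + 1)) * A * (W * ADW * W * A * Adag) := by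
  obtain ⟨hc, hDBD, hidx⟩ := hD
  set B := W * A with hB
  set k := matIndex B with hk
  have hκk : k ≤ κ := hκ ▸ le_max_right _ _
  have hkey : ∀ j : ℕ, k ≤ j → B ^ (j + 1) * D = B ^ j := by
    intro j hj
    induction j, hj using Nat.le_induction with
    | base => exact hidx
    | succ j hj ih => rw [pow_succ' B (j + 1), mul_assoc, ih, ← pow_succ']
  have hshift : ∀ j : ℕ, (A * W) ^ j * A = A * B ^ j := by
    intro j
    induction j with
    | zero => simp
    | succ j ih =>
      calc (A * W) ^ (j + 1) * A = (A * W) ^ j * A * (W * A) := by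
            rw [pow_succ (A * W) j]; simp only [Matrix.mul_assoc]
        _ = A * B ^ j * B := by rw [ih, hB]
        _ = A * B ^ (j + 1) := by rw [pow_succ B j, Matrix.mul_assoc]
  have e1 : B ^ (κ + 2) * D = B ^ (κ + 1) :=
    hkey (κ + 1) (hκk.trans (Nat.le_succ κ))
  have h1 : B ^ (κ + 1) * (B * (D * (D * B))) = B ^ (κ + 1) := by
    calc B ^ (κ + 1) * (B * (D * (D * B)))
        = B ^ (κ + 2) * D * (D * B) := by rw [pow_succ B (κ + 1)]; simp only [mul_assoc]
      _ = B ^ (κ + 1) * (D * B) := by rw [e1]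
      _ = B ^ (κ + 1) * B * D := by rw [← hc, ← mul_assoc]
      _ = B ^ (κ + 1) := by rw [← pow_succ]; exact e1
  have hfinal : (A * W) ^ (κ + 1) * A * (W * ADW * W * A) = (A * W) ^ (κ + 1) * A := by
    rw [hADW, hshift (κ + 1)]
    calc A * B ^ (κ + 1) * (W * (A * (D * D)) * W * A)
        = A * (B ^ (κ + 1) * (B * (D * (D * B)))) := by rw [hB]; simp only [Matrix.mul_assoc]
      _ = A * B ^ (κ + 1) := by rw [h1]
  have h2 : Adag * (A * W) ^ (κ + 1) * A * (W * ADW * W * A * Adag) =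
      Adag * ((A * W) ^ (κ + 1) * A * (W * ADW * W * A)) * Adag := by
    simp only [Matrix.mul_assoc]
  rw [h2, hfinal]
  simp only [Matrix.mul_assoc]
end

section
/- Let A ∈ ℂ^{m×n}, W ∈ ℂ^{n×m}, X₁ a weighted {2}-inverse of A, and X₂ a weighted {1}-inverse of A. Then the system of equations XWAWX = X, XWA = X₁WA, AWXWAWX = AW X₁WAWX₂ is consistent and has X = X₁WAWX₂ as its unique solution. -/
open Matrix

theorem weighted_bilateral_unique_system {m n : ℕ}
    (A : Matrix (Fin m) (Fin n) ℂ) (W : Matrix (Fin n) (Fin m) ℂ)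
    (X₁ X₂ : Matrix (Fin m) (Fin n) ℂ)
    (hX1 : X₁ * W * A * W * X₁ = X₁)
    (hX2 : A * W * X₂ * W * A = A) :
    ((X₁ * W * A * W * X₂) * W * A * W * (X₁ * W * A * W * X₂) = X₁ * W * A * W * X₂ ∧
      (X₁ * W * A * W * X₂) * W * A = X₁ * W * A ∧
      A * W * (X₁ * W * A * W * X₂) * W * A * W * (X₁ * W * A * W * X₂)
        = A * W * (X₁ * W * A * W * X₂)) ∧
    ∀ X : Matrix (Fin m) (Fin n) ℂ,
      (X * W * A * W * X = X ∧ X * W * A = X₁ * W * A ∧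
        A * W * X * W * A * W * X = A * W * (X₁ * W * A * W * X₂)) →
      X = X₁ * W * A * W * X₂ := by
  have hX2' : A * (W * (X₂ * (W * A))) = A := by simpa [Matrix.mul_assoc] using hX2
  have key : ∀ Z : Matrix (Fin n) (Fin n) ℂ,
      A * (W * (X₂ * (W * (A * Z)))) = A * Z := by
    intro Z
    calc A * (W * (X₂ * (W * (A * Z)))) = A * W * X₂ * W * A * Z := by
          simp [Matrix.mul_assoc]
      _ = A * Z := by rw [hX2]
  have key1 : ∀ Z : Matrix (Fin n) (Fin n) ℂ,
      X₁ * (W * (A * (W * (X₁ * Z)))) = X₁ * Z := by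
    intro Z
    calc X₁ * (W * (A * (W * (X₁ * Z)))) = X₁ * W * A * W * X₁ * Z := by
          simp [Matrix.mul_assoc]
      _ = X₁ * Z := by rw [hX1]
  refine ⟨⟨?_, ?_, ?_⟩, ?_⟩
  · simp only [Matrix.mul_assoc]
    rw [key, key1]
  · simp only [Matrix.mul_assoc]
    rw [hX2']
  · simp only [Matrix.mul_assoc]
    rw [key, key1]
  · rintro X ⟨h1, h2, h3⟩
    have h1' : X * (W * (A * (W * X))) = X := by simpa [Matrix.mul_assoc] using h1
    have h2' : X * (W * A) = X₁ * (W * A) := by simpa [Matrix.mul_assoc] using h2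
    have h3' : A * (W * (X * (W * (A * (W * X))))) = A * (W * (X₁ * (W * (A * (W * X₂))))) := by
      simpa [Matrix.mul_assoc] using h3
    rw [h1'] at h3'
    calc X = X * (W * (A * (W * X))) := h1'.symm
      _ = X * (W * A) * (W * X) := by simp [Matrix.mul_assoc]
      _ = X₁ * (W * A) * (W * X) := by rw [h2']
      _ = X₁ * (W * (A * (W * X))) := by simp [Matrix.mul_assoc]
      _ = X₁ * (W * (A * (W * (X₁ * (W * (A * (W * X₂))))))) := by rw [h3']
      _ = X₁ * (W * (A * (W * X₂))) := key1 _
      _ = X₁ * W * A * W * X₂ := by simp [Matrix.mul_assoc]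
end

section
/- Let A ∈ ℂ^{m×n}, W ∈ ℂ^{n×m}, and X₁, X₂ both weighted {1}-inverses of A. Then X₁WAWX₂ = X₂WAWX₁ if and only if AWX₂ = AWX₁ and X₁WA = X₂WA. -/
open Matrix

theorem weighted_bilateral_inner_commute {m n : ℕ}
    (A : Matrix (Fin m) (Fin n) ℂ) (W : Matrix (Fin n) (Fin m) ℂ)
    (X₁ X₂ : Matrix (Fin m) (Fin n) ℂ)
    (hX1 : A * W * X₁ * W * A = A)
    (hX2 : A * W * X₂ * W * A = A) :
    X₁ * W * A * W * X₂ = X₂ * W * A * W * X₁ ↔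
      (A * W * X₂ = A * W * X₁ ∧ X₁ * W * A = X₂ * W * A) := by
  constructor
  · intro h
    constructor
    · have h1 : A * W * (X₁ * W * A * W * X₂) = A * W * (X₂ * W * A * W * X₁) := by
        rw [h]
      calc A * W * X₂ = A * W * X₁ * W * A * W * X₂ := by rw [hX1]
        _ = A * W * (X₁ * W * A * W * X₂) := by simp only [Matrix.mul_assoc]
        _ = A * W * (X₂ * W * A * W * X₁) := h1
        _ = A * W * X₂ * W * A * W * X₁ := by simp only [Matrix.mul_assoc]
        _ = A * W * X₁ := by rw [hX2]
    · have h2 : (X₁ * W * A * W * X₂) * W * A = (X₂ * W * A * W * X₁) * W * A := by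
        rw [h]
      calc X₁ * W * A = X₁ * W * (A * W * X₂ * W * A) := by rw [hX2]
        _ = (X₁ * W * A * W * X₂) * W * A := by simp only [Matrix.mul_assoc]
        _ = (X₂ * W * A * W * X₁) * W * A := h2
        _ = X₂ * W * (A * W * X₁ * W * A) := by simp only [Matrix.mul_assoc]
        _ = X₂ * W * A := by rw [hX1]
  · rintro ⟨h1, h2⟩
    calc X₁ * W * A * W * X₂ = X₁ * W * (A * W * X₂) := by simp only [Matrix.mul_assoc]
      _ = X₁ * W * (A * W * X₁) := by rw [h1]
      _ = (X₁ * W * A) * W * X₁ := by simp only [Matrix.mul_assoc]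
      _ = (X₂ * W * A) * W * X₁ := by rw [h2]
      _ = X₂ * W * A * W * X₁ := rfl
end
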